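/- Let φ be an admissible error function. Then for all rational λ ∈ [0,1] and all u ∈ D_Δ, the series ∑_{k=0}^∞ 2^{−k}·φ*(d_ℤ(2^k·λ)·u) is absolutely convergent, and E[φ](λ, u) ≤ ∑_{k=0}^∞ 2^{−k}·φ*(d_ℤ(2^k·λ)·u). -/

import Mathlib

noncomputable section

/-- The distance of a real number to the set of integers. -/
noncomputable def dZ (x : ℝ) : ℝ := ⨅ k : ℤ, |x - (k : ℝ)|

variable {X : Type*} [AddCommGroup X] [Module ℝ X]

/-- The difference set `D_Δ = {x - y : x, y ∈ D}`. -/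
def diffSet (D : Set X) : Set X := {u | ∃ x ∈ D, ∃ y ∈ D, u = x - y}

/-- The half difference set `(1/2)·D_Δ`. -/
def halfDiff (D : Set X) : Set X := {u | ∃ x ∈ D, ∃ y ∈ D, u = (2⁻¹ : ℝ) • (x - y)}

/-- `f` is `φ`-Jensen convex on `D`. -/
def JCW (D : Set X) (φ : X → ℝ) (f : X → ℝ) : Prop :=
  ∀ x ∈ D, ∀ y ∈ D,
    f ((2⁻¹ : ℝ) • (x + y)) ≤ 2⁻¹ * f x + 2⁻¹ * f y + φ ((2⁻¹ : ℝ) • (x - y))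

/-- `φ` is an admissible error function on `(1/2)·D_Δ`:
it is even there, vanishes at `0`, and admits a `φ`-Jensen convex function. -/
def Admissible (D : Set X) (φ : X → ℝ) : Prop :=
  (∀ u ∈ halfDiff D, φ (-u) = φ u) ∧ φ 0 = 0 ∧ ∃ f : X → ℝ, JCW D φ f

/-- `φ*(u) = inf_{m ∈ ℕ, m ≥ 1} m² · φ(u/m)`, valued in `[-∞, ∞)` viewed inside `EReal`. -/
noncomputable def phiStar (φ : X → ℝ) (u : X) : EReal :=
  ⨅ m : ℕ+, ((((m : ℕ) : ℝ) ^ 2 * φ ((1 / ((m : ℕ) : ℝ)) • u) : ℝ) : EReal)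

/-- The real-valued version of `φ*` (equal to `φ*` wherever `φ*` is finite). -/
noncomputable def phiStarR (φ : X → ℝ) (u : X) : ℝ := (phiStar φ u).toReal

/-- The extended error function
`E[φ](λ,u) = sup { f(λx+(1-λ)y) - λf(x) - (1-λ)f(y) : f φ-Jensen convex, x,y ∈ D, x-y = u }`. -/
noncomputable def Eerr (D : Set X) (φ : X → ℝ) (l : ℝ) (u : X) : EReal :=
  sSup {c : EReal | ∃ f : X → ℝ, JCW D φ f ∧ ∃ x ∈ D, ∃ y ∈ D, x - y = u ∧
    c = ((f (l • x + (1 - l) • y) - l * f x - (1 - l) * f y : ℝ) : EReal)}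

/-! Fix `f` φ-Jensen convex and `x, y ∈ D`, and let `A(μ) = f(μx + (1-μ)y) - μf(x) - (1-μ)f(y)`.
Applying φ-Jensen convexity to the pair `(2μx + (1-2μ)y, y)` when `μ ≤ 1/2`, or to
`(x, (2μ-1)x + (2-2μ)y)` when `μ > 1/2`, gives
`A(μ) ≤ A({2μ})/2 + φ(d_ℤ(μ)(x - y))`.
Since `f` is also Jensen convex with error `v ↦ m²φ(v/m)` (subdivide the segment into `2m` pieces
and sum the second differences), `φ` may be replaced by `φ*` here. Iterating along the doubling
orbit `{2ᵏλ}` gives `A(λ) ≤ ∑_{k<n} 2⁻ᵏ φ*(d_ℤ(2ᵏλ)(x - y)) + 2⁻ⁿ A({2ⁿλ})`. For rational `λ`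
this orbit is finite, so both `A` and `φ*(d_ℤ(·)(x - y))` are bounded on it, the series converges
absolutely and the remainder tends to `0`. -/

lemma dZ_le (x : ℝ) (k : ℤ) : dZ x ≤ |x - k| :=
  ciInf_le ⟨0, by rintro _ ⟨k, rfl⟩; positivity⟩ k

lemma dZ_eq_min_of_mem_Icc {x : ℝ} (hx : x ∈ Set.Icc (0 : ℝ) 1) : dZ x = min x (1 - x) := by
  obtain ⟨h0, h1⟩ := hx
  refine le_antisymm (le_min ?_ ?_) (le_ciInf fun k => ?_)
  · simpa [abs_of_nonneg h0] using dZ_le x 0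
  · simpa [abs_sub_comm x 1, abs_of_nonneg (sub_nonneg.2 h1)] using dZ_le x 1
  · rcases le_or_gt k 0 with hk | hk
    · have hk' : (k : ℝ) ≤ 0 := by exact_mod_cast hk
      exact (min_le_left _ _).trans (by rw [abs_of_nonneg (by linarith)]; linarith)
    · have hk' : (1 : ℝ) ≤ k := by exact_mod_cast hk
      exact (min_le_right _ _).trans (by rw [abs_of_nonpos (by linarith)]; linarith)

lemma dZ_add_intCast (x : ℝ) (n : ℤ) : dZ (x + n) = dZ x := by
  unfold dZ
  rw [← (Equiv.addRight n).surjective.iInf_comp]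
  simp

lemma dZ_fract (x : ℝ) : dZ (Int.fract x) = dZ x := by
  rw [Int.fract, sub_eq_add_neg, ← Int.cast_neg, dZ_add_intCast]

lemma phiStar_ne_top (φ : X → ℝ) (v : X) : phiStar φ v ≠ ⊤ :=
  ne_top_of_le_ne_top (EReal.coe_ne_top _) (iInf_le _ 1)

lemma le_phiStarR {φ : X → ℝ} {v : X} {r : ℝ}
    (h : ∀ m : ℕ+, r ≤ ((m : ℕ) : ℝ) ^ 2 * φ ((1 / ((m : ℕ) : ℝ)) • v)) :
    r ≤ phiStarR φ v := by
  have hr : (r : EReal) ≤ phiStar φ v := le_iInf fun m => EReal.coe_le_coe_iff.mpr (h m)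
  have hbot : phiStar φ v ≠ ⊥ := ne_bot_of_le_ne_bot (EReal.coe_ne_bot r) hr
  rw [← EReal.coe_toReal (phiStar_ne_top φ v) hbot] at hr
  exact EReal.coe_le_coe_iff.mp hr

lemma two_mul_le_add_of_convex_seq (g : ℕ → ℝ) (m : ℕ)
    (hg : ∀ j, j + 2 ≤ 2 * m → 2 * g (j + 1) ≤ g j + g (j + 2)) :
    2 * g m ≤ g 0 + g (2 * m) := by
  have hmono : ∀ i j, j + i + 1 ≤ 2 * m →
      g (j + 1) - g j ≤ g (j + i + 1) - g (j + i) := by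
    intro i
    induction i with
    | zero => simp
    | succ i ih =>
      intro j hj
      have := hg (j + i) (by omega)
      have := ih j (by omega)
      rw [← add_assoc j i 1]
      linarith
  have hsum : ∑ j ∈ Finset.range m, (g (j + 1) - g j)
      ≤ ∑ j ∈ Finset.range m, (g (m + (j + 1)) - g (m + j)) :=
    Finset.sum_le_sum fun j hj => by
      have := hmono m j (by rw [Finset.mem_range] at hj; omega)
      rwa [add_comm j m, add_assoc] at this
  rw [Finset.sum_range_sub, Finset.sum_range_sub (fun j => g (m + j)), add_zero, ← two_mul] at hsum
  linarith

lemma two_mul_le_add_add_sq_mul_of_approx_convex_seq (h : ℕ → ℝ) (c : ℝ) (m : ℕ)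
    (hh : ∀ j, j + 2 ≤ 2 * m → 2 * h (j + 1) ≤ h j + h (j + 2) + 2 * c) :
    2 * h m ≤ h 0 + h (2 * m) + 2 * m ^ 2 * c := by
  -- adding `c j²` absorbs the error, since the second difference of `j²` is `2`
  have := two_mul_le_add_of_convex_seq (fun j => h j + c * j ^ 2) m fun j hj => by
    have := hh j hj
    push_cast
    linarith
  push_cast at this
  linarith

lemma JCW.rescale {D : Set X} (hD : Convex ℝ D) {φ f : X → ℝ} (hf : JCW D φ f) (m : ℕ+) :
    JCW D (fun v => ((m : ℕ) : ℝ) ^ 2 * φ ((1 / ((m : ℕ) : ℝ)) • v)) f := by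
  intro x hx y hy
  have hm : ((m : ℕ) : ℝ) ≠ 0 := by positivity
  set t : ℝ := 1 / (2 * (m : ℕ))
  set p : ℕ → X := fun j => x + ((j : ℝ) * t) • (y - x)
  have hpD : ∀ j, j ≤ 2 * (m : ℕ) → p j ∈ D := fun j hj => by
    refine hD.add_smul_sub_mem hx hy ⟨by positivity, ?_⟩
    rw [mul_one_div, div_le_one (by positivity)]
    exact_mod_cast hj
  have hp0 : p 0 = x := by simp [p]
  have hpm : p m = (2⁻¹ : ℝ) • (x + y) := by
    have : ((m : ℕ) : ℝ) * t = 2⁻¹ := by simp only [t]; field_simp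
    simp only [p, this]; module
  have hp2m : p (2 * m) = y := by
    have : ((2 * (m : ℕ) : ℕ) : ℝ) * t = 1 := by push_cast; simp only [t]; field_simp
    simp only [p, this]; module
  have harg : (1 / ((m : ℕ) : ℝ)) • (2⁻¹ : ℝ) • (x - y) = t • (x - y) := by
    rw [smul_smul]; congr 1; simp only [t]; field_simp
  have key := two_mul_le_add_add_sq_mul_of_approx_convex_seq (fun j => f (p j))
    (φ (t • (x - y))) m fun j hj => by
      have := hf (p j) (hpD j (by omega)) (p (j + 2)) (hpD (j + 2) hj)
      have hmid : (2⁻¹ : ℝ) • (p j + p (j + 2)) = p (j + 1) := by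
        simp only [p]; push_cast; module
      have hhalf : (2⁻¹ : ℝ) • (p j - p (j + 2)) = t • (x - y) := by
        simp only [p]; push_cast; module
      rw [hmid, hhalf] at this
      linarith
  simp only [hp0, hpm, hp2m] at key
  simp only [harg]
  linarith

def chordGap (f : X → ℝ) (x y : X) (μ : ℝ) : ℝ :=
  f (μ • x + (1 - μ) • y) - μ * f x - (1 - μ) * f y

lemma chordGap_fract (f : X → ℝ) (x y : X) {μ : ℝ} (hμ : μ ∈ Set.Icc (0 : ℝ) 1) :
    chordGap f x y (Int.fract μ) = chordGap f x y μ := by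
  rcases hμ.2.lt_or_eq with h | rfl
  · rw [Int.fract_eq_self.mpr ⟨hμ.1, h⟩]
  · simp [chordGap]

section

variable {D : Set X} {ψ f : X → ℝ} {x y : X}

lemma JCW.chordGap_le_of_le_half (hD : Convex ℝ D) (hf : JCW D ψ f) (hx : x ∈ D) (hy : y ∈ D)
    {μ : ℝ} (h0 : 0 ≤ μ) (hμ : μ ≤ 2⁻¹) :
    chordGap f x y μ ≤ 2⁻¹ * chordGap f x y (2 * μ) + ψ (μ • (x - y)) := by
  have hw : (2 * μ) • x + (1 - 2 * μ) • y ∈ D := hD hx hy (by linarith) (by linarith) (by ring)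
  have := hf _ hw y hy
  rw [show (2⁻¹ : ℝ) • ((2 * μ) • x + (1 - 2 * μ) • y + y) = μ • x + (1 - μ) • y by module,
    show (2⁻¹ : ℝ) • ((2 * μ) • x + (1 - 2 * μ) • y - y) = μ • (x - y) by module] at this
  simp only [chordGap]
  linarith

lemma JCW.chordGap_le_of_half_le (hD : Convex ℝ D) (hf : JCW D ψ f) (hx : x ∈ D) (hy : y ∈ D)
    {μ : ℝ} (hμ : 2⁻¹ ≤ μ) (h1 : μ ≤ 1) :
    chordGap f x y μ ≤ 2⁻¹ * chordGap f x y (2 * μ - 1) + ψ ((1 - μ) • (x - y)) := by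
  have hw : (2 * μ - 1) • x + (1 - (2 * μ - 1)) • y ∈ D :=
    hD hx hy (by linarith) (by linarith) (by ring)
  have := hf x hx _ hw
  rw [show (2⁻¹ : ℝ) • (x + ((2 * μ - 1) • x + (1 - (2 * μ - 1)) • y)) = μ • x + (1 - μ) • y by
      module,
    show (2⁻¹ : ℝ) • (x - ((2 * μ - 1) • x + (1 - (2 * μ - 1)) • y)) = (1 - μ) • (x - y) by
      module] at this
  simp only [chordGap]
  linarith

lemma JCW.chordGap_le_half_fract_two_mul_add (hD : Convex ℝ D) (hf : JCW D ψ f) (hx : x ∈ D)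
    (hy : y ∈ D) {μ : ℝ} (hμ : μ ∈ Set.Icc (0 : ℝ) 1) :
    chordGap f x y μ ≤ 2⁻¹ * chordGap f x y (Int.fract (2 * μ)) + ψ (dZ μ • (x - y)) := by
  obtain ⟨h0, h1⟩ := hμ
  rw [dZ_eq_min_of_mem_Icc ⟨h0, h1⟩]
  rcases le_or_gt μ 2⁻¹ with hhalf | hhalf
  · rw [min_eq_left (by linarith), chordGap_fract f x y ⟨by linarith, by linarith⟩]
    exact hf.chordGap_le_of_le_half hD hx hy h0 hhalf
  · rw [min_eq_right (by linarith), ← Int.fract_sub_one,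
      chordGap_fract f x y ⟨by linarith, by linarith⟩]
    exact hf.chordGap_le_of_half_le hD hx hy hhalf.le h1

lemma JCW.chordGap_le_half_fract_two_mul_add_phiStarR {φ : X → ℝ} (hD : Convex ℝ D)
    (hf : JCW D φ f) (hx : x ∈ D) (hy : y ∈ D) {μ : ℝ} (hμ : μ ∈ Set.Icc (0 : ℝ) 1) :
    chordGap f x y μ ≤
      2⁻¹ * chordGap f x y (Int.fract (2 * μ)) + phiStarR φ (dZ μ • (x - y)) := by
  have := le_phiStarR fun m => sub_le_iff_le_add'.2
    ((hf.rescale hD m).chordGap_le_half_fract_two_mul_add hD hx hy hμ)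
  linarith

lemma JCW.chordGap_le_sum_add {φ : X → ℝ} (hD : Convex ℝ D) (hf : JCW D φ f) (hx : x ∈ D)
    (hy : y ∈ D) {l : ℝ} (hl : l ∈ Set.Icc (0 : ℝ) 1) (n : ℕ) :
    chordGap f x y l ≤
      ∑ k ∈ Finset.range n, (1 / 2 : ℝ) ^ k * phiStarR φ (dZ (2 ^ k * l) • (x - y)) +
        (1 / 2 : ℝ) ^ n * chordGap f x y (Int.fract (2 ^ n * l)) := by
  induction n with
  | zero => simp [chordGap_fract f x y hl]
  | succ n ih =>
    have hstep := hf.chordGap_le_half_fract_two_mul_add_phiStarR hD hx hy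
      ⟨Int.fract_nonneg (2 ^ n * l), (Int.fract_lt_one _).le⟩
    have hdouble : Int.fract (2 * Int.fract (2 ^ n * l)) = Int.fract (2 ^ (n + 1) * l) := by
      have : 2 * Int.fract (2 ^ n * l) = 2 ^ (n + 1) * l - ((2 * ⌊2 ^ n * l⌋ : ℤ) : ℝ) := by
        rw [Int.fract]; push_cast; ring
      rw [this, Int.fract_sub_intCast]
    rw [dZ_fract, hdouble] at hstep
    rw [Finset.sum_range_succ, pow_succ]
    nlinarith [pow_pos (by norm_num : (0 : ℝ) < 1 / 2) n]

lemma finite_range_fract_two_pow_mul_ratCast (q : ℚ) :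
    (Set.range fun k : ℕ => Int.fract (2 ^ k * (q : ℝ))).Finite := by
  refine ((Set.finite_Ico (0 : ℤ) q.den).image fun j : ℤ => (j : ℝ) / q.den).subset ?_
  rintro _ ⟨k, rfl⟩
  refine ⟨2 ^ k * q.num % q.den, ⟨Int.emod_nonneg _ (by positivity),
    Int.emod_lt_of_pos _ (by positivity)⟩, ?_⟩
  change ((2 ^ k * q.num % q.den : ℤ) : ℝ) / q.den = Int.fract (2 ^ k * (q : ℝ))
  rw [← Int.fract_div_intCast_eq_div_intCast_mod, Rat.cast_def]
  push_cast
  ring_nf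

lemma summable_abs_half_pow_mul_comp_fract (q : ℚ) (g : ℝ → ℝ) :
    Summable fun k : ℕ => |(1 / 2 : ℝ) ^ k * g (Int.fract (2 ^ k * q))| := by
  obtain ⟨C, hC⟩ := ((finite_range_fract_two_pow_mul_ratCast q).image fun t => |g t|).bddAbove
  refine .of_nonneg_of_le (fun _ => abs_nonneg _) (fun k => ?_) (summable_geometric_two.mul_right C)
  rw [abs_mul, abs_of_nonneg (by positivity)]
  exact mul_le_mul_of_nonneg_left (hC ⟨_, ⟨k, rfl⟩, rfl⟩) (by positivity)

lemma JCW.chordGap_le_tsum {φ : X → ℝ} (hD : Convex ℝ D) (hf : JCW D φ f) (hx : x ∈ D)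
    (hy : y ∈ D) (q : ℚ) (hq : (q : ℝ) ∈ Set.Icc (0 : ℝ) 1) :
    chordGap f x y q ≤ ∑' k : ℕ, (1 / 2 : ℝ) ^ k * phiStarR φ (dZ (2 ^ k * q) • (x - y)) := by
  have hsum : Summable fun k : ℕ => (1 / 2 : ℝ) ^ k * phiStarR φ (dZ (2 ^ k * q) • (x - y)) := by
    simpa only [dZ_fract] using
      (summable_abs_half_pow_mul_comp_fract q fun t => phiStarR φ (dZ t • (x - y))).of_abs
  have hrem := (summable_abs_half_pow_mul_comp_fract q (chordGap f x y)).of_abs.tendsto_atTop_zero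
  have hlim : Filter.Tendsto (fun n : ℕ =>
      ∑ k ∈ Finset.range n, (1 / 2 : ℝ) ^ k * phiStarR φ (dZ (2 ^ k * q) • (x - y)) +
        (1 / 2 : ℝ) ^ n * chordGap f x y (Int.fract (2 ^ n * q)))
      Filter.atTop (nhds (∑' k : ℕ, (1 / 2 : ℝ) ^ k * phiStarR φ (dZ (2 ^ k * q) • (x - y)))) := by
    simpa using hsum.hasSum.tendsto_sum_nat.add hrem
  exact ge_of_tendsto' hlim (hf.chordGap_le_sum_add hD hx hy hq)

end

theorem stmt19_general {X : Type*} [AddCommGroup X] [Module ℝ X] (D : Set X)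
    (hD : Convex ℝ D) (φ : X → ℝ)
    (l : ℝ) (hl : l ∈ Set.Icc (0 : ℝ) 1) (hrat : ∃ q : ℚ, (q : ℝ) = l)
    (u : X) :
    Summable (fun k : ℕ => |(1 / 2 : ℝ) ^ k * phiStarR φ (dZ (2 ^ k * l) • u)|) ∧
    Eerr D φ l u ≤
      ((∑' k : ℕ, (1 / 2 : ℝ) ^ k * phiStarR φ (dZ (2 ^ k * l) • u) : ℝ) : EReal) := by
  obtain ⟨q, rfl⟩ := hrat
  refine ⟨by simpa only [dZ_fract] using
    summable_abs_half_pow_mul_comp_fract q (fun t => phiStarR φ (dZ t • u)), sSup_le ?_⟩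
  rintro _ ⟨f, hf, x, hx, y, hy, rfl, rfl⟩
  exact EReal.coe_le_coe_iff.2 (hf.chordGap_le_tsum hD hx hy q hl)

/-- for rational `λ ∈ [0,1]` and `u ∈ D_Δ`, the Takagi-type series
`∑ 2^{-k} φ*(d_ℤ(2^k λ)·u)` converges absolutely and bounds `E[φ](λ,u)` from above. -/
theorem stmt19 {X : Type*} [AddCommGroup X] [Module ℝ X] (D : Set X)
    (hD : Convex ℝ D) (hne : D.Nonempty) (φ : X → ℝ) (hφ : Admissible D φ)
    (l : ℝ) (hl : l ∈ Set.Icc (0 : ℝ) 1) (hrat : ∃ q : ℚ, (q : ℝ) = l)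
    (u : X) (hu : u ∈ diffSet D) :
    Summable (fun k : ℕ => |(1 / 2 : ℝ) ^ k * phiStarR φ (dZ (2 ^ k * l) • u)|) ∧
    Eerr D φ l u ≤
      ((∑' k : ℕ, (1 / 2 : ℝ) ^ k * phiStarR φ (dZ (2 ^ k * l) • u) : ℝ) : EReal) :=
  stmt19_general D hD φ l hl hrat u
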